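/- arXiv:1210.5659 — 2 statements merged into one kernel-verified Lean document; each statement's English description precedes it below -/
import Mathlib

section
/- For all compactly branching WMTS S₁ and S₂, the thorough refinement distance is bounded above by the modal refinement distance: d_t(S₁,S₂) ≤ d_m(S₁,S₂). -/
open scoped ENNReal

namespace WMTSQuant

/-- A closed extended-integer interval `[lo, hi]` with `lo ∈ ℤ ∪ {-∞}`,
`hi ∈ ℤ ∪ {∞}` and `lo ≤ hi`. -/
structure EInterval where
  lo : EReal
  hi : EReal
  lo_mem : lo = ⊥ ∨ ∃ n : ℤ, lo = ((n : ℝ) : EReal)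
  hi_mem : hi = ⊤ ∨ ∃ n : ℤ, hi = ((n : ℝ) : EReal)
  lo_le_hi : lo ≤ hi

/-- Specification labels 𝕂 = Σ × 𝕀. -/
abbrev SLabel (Act : Type) := Act × EInterval

/-- The refinement order ⊑ on specification labels. -/
def LabelLE {Act : Type} (k k' : SLabel Act) : Prop :=
  k.1 = k'.1 ∧ k'.2.lo ≤ k.2.lo ∧ k.2.hi ≤ k'.2.hi

/-- Implementation labels: singleton integer intervals. -/
def IsImpLabel {Act : Type} (k : SLabel Act) : Prop :=
  ∃ n : ℤ, k.2.lo = ((n : ℝ) : EReal) ∧ k.2.hi = ((n : ℝ) : EReal)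

/-- Truncation of an extended real to `[0,∞]`. -/
noncomputable def erealToNNE (x : EReal) : ℝ≥0∞ :=
  if x = ⊤ then ⊤ else ENNReal.ofReal x.toReal

open Classical in
/-- The label distance d_𝕂. -/
noncomputable def dK {Act : Type} (k ℓ : SLabel Act) : ℝ≥0∞ :=
  if k.1 = ℓ.1 then erealToNNE (max (ℓ.2.lo - k.2.lo) (max (k.2.hi - ℓ.2.hi) 0)) else ⊤

/-- Weighted modal transition systems. -/
structure WMTS (Act : Type) where
  State : Type
  init : State
  may : State → SLabel Act → State → Prop
  must : State → SLabel Act → State → Prop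
  must_may : ∀ s k s', must s k s' → ∃ ℓ, LabelLE k ℓ ∧ may s ℓ s'

variable {Act : Type}

/-- Implementations: `must = may`, all labels singleton integer intervals. -/
def WMTS.IsImplementation (S : WMTS Act) : Prop :=
  (∀ s k s', S.may s k s' ↔ S.must s k s') ∧
    ∀ s k s', S.must s k s' → IsImpLabel k

/-- (Boolean) modal refinement `S₁ ≤ₘ S₂`. -/
def Refines (S₁ S₂ : WMTS Act) : Prop :=
  ∃ R : S₁.State → S₂.State → Prop, R S₁.init S₂.init ∧
    ∀ s₁ s₂, R s₁ s₂ →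
      (∀ k₁ t₁, S₁.may s₁ k₁ t₁ →
        ∃ k₂ t₂, S₂.may s₂ k₂ t₂ ∧ LabelLE k₁ k₂ ∧ R t₁ t₂) ∧
      (∀ k₂ t₂, S₂.must s₂ k₂ t₂ →
        ∃ k₁ t₁, S₁.must s₁ k₁ t₁ ∧ LabelLE k₁ k₂ ∧ R t₁ t₂)

/-- Implementation semantics ⟦S⟧. -/
def Impl (S : WMTS Act) : Set (WMTS Act) :=
  {I | I.IsImplementation ∧ Refines I S}

/-- The endofunction whose least fixed point is the modal refinement distance. -/
noncomputable def dmF (lam : ℝ≥0∞) (S₁ S₂ : WMTS Act) :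
    (S₁.State → S₂.State → ℝ≥0∞) →o (S₁.State → S₂.State → ℝ≥0∞) where
  toFun f := fun s₁ s₂ =>
    max
      (⨆ k₁, ⨆ t₁, ⨆ _ : S₁.may s₁ k₁ t₁,
        ⨅ k₂, ⨅ t₂, ⨅ _ : S₂.may s₂ k₂ t₂, dK k₁ k₂ + lam * f t₁ t₂)
      (⨆ k₂, ⨆ t₂, ⨆ _ : S₂.must s₂ k₂ t₂,
        ⨅ k₁, ⨅ t₁, ⨅ _ : S₁.must s₁ k₁ t₁, dK k₁ k₂ + lam * f t₁ t₂)
  monotone' := by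
    intro f g hfg s₁ s₂
    dsimp only
    gcongr with k₁ t₁ h k₂ t₂ h' k₂ t₂ h k₁ t₁ h' <;> exact hfg _ _

/-- The modal refinement distance between states. -/
noncomputable def dm (lam : ℝ≥0∞) (S₁ S₂ : WMTS Act) :
    S₁.State → S₂.State → ℝ≥0∞ :=
  OrderHom.lfp (dmF lam S₁ S₂)

/-- The modal refinement distance between systems. -/
noncomputable def dmInit (lam : ℝ≥0∞) (S₁ S₂ : WMTS Act) : ℝ≥0∞ :=
  dm lam S₁ S₂ S₁.init S₂.init

/-- The endofunction whose least fixed point is the implementation distance. -/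
noncomputable def diF (lam : ℝ≥0∞) (I₁ I₂ : WMTS Act) :
    (I₁.State → I₂.State → ℝ≥0∞) →o (I₁.State → I₂.State → ℝ≥0∞) where
  toFun f := fun i₁ i₂ =>
    max
      (⨆ k₁, ⨆ j₁, ⨆ _ : I₁.must i₁ k₁ j₁,
        ⨅ k₂, ⨅ j₂, ⨅ _ : I₂.must i₂ k₂ j₂, dK k₁ k₂ + lam * f j₁ j₂)
      (⨆ k₂, ⨆ j₂, ⨆ _ : I₂.must i₂ k₂ j₂,
        ⨅ k₁, ⨅ j₁, ⨅ _ : I₁.must i₁ k₁ j₁, dK k₁ k₂ + lam * f j₁ j₂)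
  monotone' := by
    intro f g hfg i₁ i₂
    dsimp only
    gcongr with k₁ t₁ h k₂ t₂ h' k₂ t₂ h k₁ t₁ h' <;> exact hfg _ _

/-- The implementation distance between states of implementations. -/
noncomputable def di (lam : ℝ≥0∞) (I₁ I₂ : WMTS Act) :
    I₁.State → I₂.State → ℝ≥0∞ :=
  OrderHom.lfp (diF lam I₁ I₂)

/-- The implementation distance between implementations. -/
noncomputable def diInit (lam : ℝ≥0∞) (I₁ I₂ : WMTS Act) : ℝ≥0∞ :=
  di lam I₁ I₂ I₁.init I₂.init

/-- The thorough refinement distance. -/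
noncomputable def dt (lam : ℝ≥0∞) (S₁ S₂ : WMTS Act) : ℝ≥0∞ :=
  ⨆ I₁ ∈ Impl S₁, ⨅ I₂ ∈ Impl S₂, diInit lam I₁ I₂


/-- Pointwise sum of intervals. -/
noncomputable def EInterval.add (I J : EInterval) : EInterval where
  lo := I.lo + J.lo
  hi := I.hi + J.hi
  lo_mem := by
    rcases I.lo_mem with h | ⟨n, h⟩
    · exact Or.inl (by rw [h, EReal.bot_add])
    · rcases J.lo_mem with h' | ⟨m, h'⟩
      · exact Or.inl (by rw [h', EReal.add_bot])
      · exact Or.inr ⟨n + m, by rw [h, h', ← EReal.coe_add]; norm_cast⟩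
  hi_mem := by
    rcases I.hi_mem with h | ⟨n, h⟩
    · exact Or.inl (by rw [h, EReal.top_add_of_ne_bot]
                       rcases J.hi_mem with h' | ⟨m, h'⟩ <;> simp [h'])
    · rcases J.hi_mem with h' | ⟨m, h'⟩
      · exact Or.inl (by rw [h', EReal.add_top_of_ne_bot]; simp [h])
      · exact Or.inr ⟨n + m, by rw [h, h', ← EReal.coe_add]; norm_cast⟩
  lo_le_hi := add_le_add I.lo_le_hi J.lo_le_hi

/-- Widening `I ± δ` of an interval. -/
noncomputable def EInterval.widen (I : EInterval) (δ : ℕ) : EInterval where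
  lo := I.lo - ((δ : ℝ) : EReal)
  hi := I.hi + ((δ : ℝ) : EReal)
  lo_mem := by
    rcases I.lo_mem with h | ⟨n, h⟩
    · exact Or.inl (by rw [h, EReal.bot_sub])
    · exact Or.inr ⟨n - δ, by rw [h, ← EReal.coe_sub]; norm_cast⟩
  hi_mem := by
    rcases I.hi_mem with h | ⟨n, h⟩
    · exact Or.inl (by rw [h, EReal.top_add_of_ne_bot]; exact EReal.coe_ne_bot _)
    · exact Or.inr ⟨n + δ, by rw [h, ← EReal.coe_add]; norm_cast⟩
  lo_le_hi := by
    refine le_trans ?_ (le_trans I.lo_le_hi ?_)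
    · rw [sub_eq_add_neg]
      nth_rewrite 2 [show I.lo = I.lo + 0 by rw [add_zero]]
      refine add_le_add le_rfl ?_
      rw [← EReal.coe_neg, ← EReal.coe_zero, EReal.coe_le_coe_iff]
      simp
    · nth_rewrite 1 [show I.hi = I.hi + 0 by rw [add_zero]]
      refine add_le_add le_rfl ?_
      rw [← EReal.coe_zero, EReal.coe_le_coe_iff]
      simp



/-- Symmetrization of a hemimetric. -/
noncomputable def symDist {α : Type*} (d : α → α → ℝ≥0∞) : α → α → ℝ≥0∞ :=
  fun x y => max (d x y) (d y x)

/-- Product distance. -/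
noncomputable def prodDist {α β : Type*} (d : α → α → ℝ≥0∞) (e : β → β → ℝ≥0∞) :
    α × β → α × β → ℝ≥0∞ :=
  fun p q => d p.1 q.1 + e p.2 q.2

/-- (Sequential) compactness of a set with respect to an `ℝ≥0∞`-valued distance. -/
def CompactIn {α : Type*} (d : α → α → ℝ≥0∞) (A : Set α) : Prop :=
  ∀ u : ℕ → α, (∀ n, u n ∈ A) →
    ∃ x ∈ A, ∃ φ : ℕ → ℕ, StrictMono φ ∧
      Filter.Tendsto (fun n => d x (u (φ n))) Filter.atTop (nhds 0)

/-- Compactly branching WMTS. -/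
def CompactlyBranching (lam : ℝ≥0∞) (S : WMTS Act) : Prop :=
  ∀ s : S.State,
    CompactIn (prodDist (symDist (dm lam S S)) (symDist dK))
      {p : S.State × SLabel Act | S.may s p.2 p.1} ∧
    CompactIn (prodDist (symDist (dm lam S S)) (symDist dK))
      {p : S.State × SLabel Act | S.must s p.2 p.1}

/-- Deterministic WMTS. -/
def Deterministic (S : WMTS Act) : Prop :=
  ∀ (s : S.State) (a : Act) (I₁ I₂ : EInterval) (t₁ t₂ : S.State),
    S.may s (a, I₁) t₁ → S.may s (a, I₂) t₂ → I₁ = I₂ ∧ t₁ = t₂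

/-- `S'` is an ε-relaxation of `S`. -/
def Relaxation (lam ε : ℝ≥0∞) (S S' : WMTS Act) : Prop :=
  Refines S S' ∧ dmInit lam S' S ≤ ε

/-- The ε-extended implementation semantics ⟦S⟧⁺ᵉ. -/
def ImplExt (lam ε : ℝ≥0∞) (S : WMTS Act) : Set (WMTS Act) :=
  {I | I.IsImplementation ∧ dmInit lam I S ≤ ε}

/-- The δ-widening S⁺δ of a WMTS. -/
noncomputable def WMTS.widen (S : WMTS Act) (δ : ℕ) : WMTS Act where
  State := S.State
  init := S.init
  may s k t := ∃ a I, S.may s (a, I) t ∧ k = (a, I.widen δ)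
  must s k t := ∃ a I, S.must s (a, I) t ∧ k = (a, I.widen δ)
  must_may := by
    rintro s k t ⟨a, I, h, rfl⟩
    obtain ⟨ℓ, hle, hmay⟩ := S.must_may _ _ _ h
    refine ⟨(ℓ.1, ℓ.2.widen δ), ⟨hle.1, ?_, ?_⟩, ℓ.1, ℓ.2, hmay, rfl⟩
    · exact EReal.sub_le_sub hle.2.1 le_rfl
    · exact add_le_add hle.2.2 le_rfl

/-- Definedness of label synchronization ⊕. -/
def OplusDefined (k ℓ : SLabel Act) : Prop := k.1 = ℓ.1

/-- Label synchronization ⊕ (adding the intervals). -/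
noncomputable def oplus (k ℓ : SLabel Act) : SLabel Act :=
  (k.1, k.2.add ℓ.2)

/-- Definedness of label quotient ⊖ (equal actions, the difference interval is a
valid extended-integer interval). -/
def OminusDefined (k ℓ : SLabel Act) : Prop :=
  k.1 = ℓ.1 ∧ k.2.lo - ℓ.2.lo ≤ k.2.hi - ℓ.2.hi ∧
    (k.2.lo - ℓ.2.lo = ⊥ ∨ ∃ n : ℤ, k.2.lo - ℓ.2.lo = ((n : ℝ) : EReal)) ∧
    (k.2.hi - ℓ.2.hi = ⊤ ∨ ∃ n : ℤ, k.2.hi - ℓ.2.hi = ((n : ℝ) : EReal))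

/-- Label quotient ⊖. -/
noncomputable def ominus (k ℓ : SLabel Act) (h : OminusDefined k ℓ) : SLabel Act :=
  (k.1, ⟨k.2.lo - ℓ.2.lo, k.2.hi - ℓ.2.hi, h.2.2.1, h.2.2.2, h.2.1⟩)

/-- Structural composition S₁ ∥ S₂ (CSP-style synchronization, adding weights). -/
noncomputable def par (S₁ S₂ : WMTS Act) : WMTS Act where
  State := S₁.State × S₂.State
  init := (S₁.init, S₂.init)
  may p k q := ∃ k₁ k₂, S₁.may p.1 k₁ q.1 ∧ S₂.may p.2 k₂ q.2 ∧
    OplusDefined k₁ k₂ ∧ k = oplus k₁ k₂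
  must p k q := ∃ k₁ k₂, S₁.must p.1 k₁ q.1 ∧ S₂.must p.2 k₂ q.2 ∧
    OplusDefined k₁ k₂ ∧ k = oplus k₁ k₂
  must_may := by
    rintro p k q ⟨k₁, k₂, h₁, h₂, hd, rfl⟩
    obtain ⟨ℓ₁, hle₁, hmay₁⟩ := S₁.must_may _ _ _ h₁
    obtain ⟨ℓ₂, hle₂, hmay₂⟩ := S₂.must_may _ _ _ h₂
    refine ⟨oplus ℓ₁ ℓ₂, ⟨?_, ?_, ?_⟩,
      ℓ₁, ℓ₂, hmay₁, hmay₂, by rw [OplusDefined, ← hle₁.1, ← hle₂.1]; exact hd, rfl⟩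
    · exact hle₁.1
    · exact add_le_add hle₁.2.1 hle₂.2.1
    · exact add_le_add hle₁.2.2 hle₂.2.2

section Quotient

variable (S₁ S₂ : WMTS Act)

/-- May transitions of the (unpruned) quotient; `none` is the universal state u. -/
def qmay : Option (S₁.State × S₂.State) → SLabel Act → Option (S₁.State × S₂.State) → Prop
  | some p, k, some q =>
      (∃ k₁ k₂, ∃ h : OminusDefined k₁ k₂,
        S₁.may p.1 k₁ q.1 ∧ S₂.may p.2 k₂ q.2 ∧ k = ominus k₁ k₂ h) ∨
      (∃ k₁ k₂, ∃ h : OminusDefined k₁ k₂,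
        S₁.must p.1 k₁ q.1 ∧ S₂.must p.2 k₂ q.2 ∧ k = ominus k₁ k₂ h)
  | some p, k, none => ∀ k₂ t₂, S₂.may p.2 k₂ t₂ → ¬ OplusDefined k k₂
  | none, _, none => True
  | none, _, some _ => False

/-- Must transitions of the (unpruned) quotient. -/
def qmust : Option (S₁.State × S₂.State) → SLabel Act → Option (S₁.State × S₂.State) → Prop
  | some p, k, some q =>
      ∃ k₁ k₂, ∃ h : OminusDefined k₁ k₂,
        S₁.must p.1 k₁ q.1 ∧ S₂.must p.2 k₂ q.2 ∧ k = ominus k₁ k₂ h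
  | _, _, _ => False

/-- Inconsistent states of the quotient. -/
def QBad : Option (S₁.State × S₂.State) → Prop
  | some p => ∃ k₁ t₁, S₁.must p.1 k₁ t₁ ∧
      ∀ k₂ t₂, S₂.must p.2 k₂ t₂ → ¬ OminusDefined k₁ k₂
  | none => False

/-- States removed by pruning: those that can reach an inconsistent state via
must transitions (reflexive-transitive closure of `pre`). -/
def QPruned (p : Option (S₁.State × S₂.State)) : Prop :=
  ∃ q, Relation.ReflTransGen (fun x y => ∃ k, qmust S₁ S₂ x k y) p q ∧ QBad S₁ S₂ q

/-- The quotient S₁ ⫽ S₂, defined whenever the initial state survives pruning. -/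
noncomputable def quotient' (h : ¬ QPruned S₁ S₂ (some (S₁.init, S₂.init))) :
    WMTS Act where
  State := {p : Option (S₁.State × S₂.State) // ¬ QPruned S₁ S₂ p}
  init := ⟨some (S₁.init, S₂.init), h⟩
  may p k q := qmay S₁ S₂ p.1 k q.1
  must p k q := qmust S₁ S₂ p.1 k q.1
  must_may := by
    rintro ⟨p, hp⟩ k ⟨q, hq⟩ hmust
    refine ⟨k, ⟨rfl, le_rfl, le_rfl⟩, ?_⟩
    cases p with
    | none => exact hmust.elim
    | some p =>
      cases q with
      | none => exact hmust.elim
      | some q => exact Or.inr hmust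

end Quotient

/-- Formulae of the logic L. -/
inductive Formula (Act : Type) where
  | tt : Formula Act
  | ff : Formula Act
  | diam : SLabel Act → Formula Act → Formula Act
  | box : SLabel Act → Formula Act → Formula Act
  | and : Formula Act → Formula Act → Formula Act
  | or : Formula Act → Formula Act → Formula Act

/-- Disjunction-free formulae. -/
def Formula.DisjFree : Formula Act → Prop
  | .tt => True
  | .ff => True
  | .diam _ φ => φ.DisjFree
  | .box _ φ => φ.DisjFree
  | .and φ ψ => φ.DisjFree ∧ ψ.DisjFree
  | .or _ _ => False

/-- Quantitative semantics ⟦φ⟧ : S → [0,∞] of the logic L. -/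
noncomputable def sem (lam : ℝ≥0∞) (S : WMTS Act) : Formula Act → S.State → ℝ≥0∞
  | .tt, _ => 0
  | .ff, _ => ⊤
  | .and φ ψ, s => max (sem lam S φ s) (sem lam S ψ s)
  | .or φ ψ, s => min (sem lam S φ s) (sem lam S ψ s)
  | .diam ℓ φ, s =>
      ⨅ k, ⨅ t, ⨅ _ : S.must s k t ∧ dK k ℓ ≠ ⊤, dK k ℓ + lam * sem lam S φ t
  | .box ℓ φ, s =>
      ⨆ k, ⨆ t, ⨆ _ : S.may s k t ∧ dK k ℓ ≠ ⊤, dK k ℓ + lam * sem lam S φ t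

/-- ⟦φ⟧S = ⟦φ⟧s⁰. -/
noncomputable def semInit (lam : ℝ≥0∞) (S : WMTS Act) (φ : Formula Act) : ℝ≥0∞ :=
  sem lam S φ S.init


/-!
Fix `I₁ ∈ ⟦S₁⟧` and `ε > 0`, and put `δ = (1-λ)ε`. An implementation of `S₂` on the states
`I₁.State × S₂.State` mimics `I₁` while tracking `S₂`: from `(i, s)` it takes every
`i ⟶^{k₁} j` that is answered by some `s ⇢^{k₂} t` which is `δ`-optimal in the fixed-point
equation of `d_m`, i.e. `d_𝕂(k₁,k₂) + λ·d_m(j,t) < d_m(i,s) + δ`, labelled by the integer of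
`k₂`'s interval nearest to the weight of `k₁`. When `d_m(i,s) < ∞` every must-transition of `S₂`
has such an answer, and when `d_m(i,s) = ∞` the construction just copies it and leaves `i`
unchanged; so this is an implementation of `S₂`. Since `δ + λε = ε`, the bound
`d(i,(i,s)) ≤ d_m(i,s) + ε` is a post-fixed point of the implementation distance operator.
Finally `d_m` obeys the triangle inequality and vanishes on modal refinement, so
`d_m(I₁,S₂) ≤ d_m(I₁,S₁) + d_m(S₁,S₂) = d_m(S₁,S₂)`.
-/

lemma LabelLE.refl (k : SLabel Act) : LabelLE k k := ⟨rfl, le_rfl, le_rfl⟩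

lemma LabelLE.trans {k ℓ m : SLabel Act} (h₁ : LabelLE k ℓ) (h₂ : LabelLE ℓ m) : LabelLE k m :=
  ⟨h₁.1.trans h₂.1, h₂.2.1.trans h₁.2.1, h₁.2.2.trans h₂.2.2⟩

lemma erealToNNE_eq_toENNReal (x : EReal) : erealToNNE x = x.toENNReal := rfl

lemma _root_.EReal.toENNReal_sub_le_add (x y z : EReal) :
    (x - z).toENNReal ≤ (x - y).toENNReal + (y - z).toENNReal := by
  induction y using EReal.rec with
  | bot =>
    rcases eq_or_ne x ⊥ with rfl | hx
    · simp
    · simp [EReal.sub_bot hx]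
  | top =>
    rcases eq_or_ne z ⊤ with rfl | hz
    · simp
    · simp [EReal.top_sub hz]
  | coe b =>
    refine (EReal.toENNReal_le_toENNReal (le_of_eq ?_)).trans EReal.toENNReal_add_le
    rw [sub_eq_add_neg, sub_eq_add_neg, sub_eq_add_neg, add_assoc, ← add_assoc (-(b : EReal)),
      ← EReal.coe_neg, ← EReal.coe_add, neg_add_cancel, EReal.coe_zero, zero_add]

lemma dK_of_fst_eq {k ℓ : SLabel Act} (h : k.1 = ℓ.1) :
    dK k ℓ = max (ℓ.2.lo - k.2.lo).toENNReal (k.2.hi - ℓ.2.hi).toENNReal := by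
  have hmono : Monotone EReal.toENNReal := fun _ _ => EReal.toENNReal_le_toENNReal
  rw [dK, if_pos h, erealToNNE_eq_toENNReal, hmono.map_max, hmono.map_max,
    EReal.toENNReal_zero, max_eq_left zero_le]

lemma dK_of_fst_ne {k ℓ : SLabel Act} (h : k.1 ≠ ℓ.1) : dK k ℓ = ⊤ := by
  rw [dK, if_neg h]

lemma dK_eq_zero_of_labelLE {k ℓ : SLabel Act} (h : LabelLE k ℓ) : dK k ℓ = 0 := by
  rw [dK_of_fst_eq h.1, EReal.toENNReal_of_nonpos (EReal.sub_nonpos.2 h.2.1),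
    EReal.toENNReal_of_nonpos (EReal.sub_nonpos.2 h.2.2), max_self]

lemma dK_triangle (k₁ k₂ k₃ : SLabel Act) : dK k₁ k₃ ≤ dK k₁ k₂ + dK k₂ k₃ := by
  by_cases h₁₂ : k₁.1 = k₂.1
  · by_cases h₂₃ : k₂.1 = k₃.1
    · rw [dK_of_fst_eq (h₁₂.trans h₂₃), dK_of_fst_eq h₁₂, dK_of_fst_eq h₂₃]
      refine max_le ?_ ?_
      · refine (EReal.toENNReal_sub_le_add _ k₂.2.lo _).trans ?_
        rw [add_comm]
        gcongr <;> exact le_max_left _ _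
      · refine (EReal.toENNReal_sub_le_add _ k₂.2.hi _).trans ?_
        gcongr <;> exact le_max_right _ _
    · simp [dK_of_fst_ne h₂₃]
  · simp [dK_of_fst_ne h₁₂]

def EInterval.pt (n : ℤ) : EInterval :=
  ⟨(n : ℝ), (n : ℝ), Or.inr ⟨n, rfl⟩, Or.inr ⟨n, rfl⟩, le_rfl⟩

lemma isImpLabel_pt (a : Act) (n : ℤ) : IsImpLabel (a, EInterval.pt n) := ⟨n, rfl, rfl⟩

lemma EInterval.exists_clamp (I : EInterval) (n : ℤ) :
    ∃ m : ℤ, I.lo ≤ ((m : ℝ) : EReal) ∧ ((m : ℝ) : EReal) ≤ I.hi ∧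
      (((m : ℝ) : EReal) - (n : ℝ)).toENNReal ≤ (I.lo - (n : ℝ)).toENNReal ∧
      (((n : ℝ) : EReal) - (m : ℝ)).toENNReal ≤ (((n : ℝ) : EReal) - I.hi).toENNReal := by
  rcases lt_or_ge ((n : ℝ) : EReal) I.lo with hlo | hlo
  · obtain ⟨m, hm⟩ := I.lo_mem.resolve_left (ne_bot_of_gt hlo)
    rw [hm] at hlo ⊢
    refine ⟨m, le_rfl, hm ▸ I.lo_le_hi, le_rfl, ?_⟩
    rw [EReal.toENNReal_of_nonpos (EReal.sub_nonpos.2 hlo.le)]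
    exact zero_le
  rcases lt_or_ge I.hi ((n : ℝ) : EReal) with hhi | hhi
  · obtain ⟨m, hm⟩ := I.hi_mem.resolve_left (ne_top_of_lt hhi)
    rw [hm] at hhi ⊢
    refine ⟨m, hm ▸ I.lo_le_hi, le_rfl, ?_, le_rfl⟩
    rw [EReal.toENNReal_of_nonpos (EReal.sub_nonpos.2 hhi.le)]
    exact zero_le
  · refine ⟨n, hlo, hhi, ?_, ?_⟩ <;>
    · rw [EReal.toENNReal_of_nonpos (EReal.sub_nonpos.2 le_rfl)]
      exact zero_le

lemma exists_isImpLabel_labelLE_dK_le {k : SLabel Act} (hk : IsImpLabel k) (k₂ : SLabel Act) :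
    ∃ ℓ, IsImpLabel ℓ ∧ LabelLE ℓ k₂ ∧ dK k ℓ ≤ dK k k₂ := by
  obtain ⟨n, hlo, hhi⟩ := hk
  obtain ⟨m, hlo', hhi', hl, hh⟩ := k₂.2.exists_clamp n
  refine ⟨(k₂.1, .pt m), isImpLabel_pt _ _, ⟨rfl, hlo', hhi'⟩, ?_⟩
  by_cases h : k.1 = k₂.1
  · rw [dK_of_fst_eq (ℓ := (k₂.1, .pt m)) h, dK_of_fst_eq h, hlo, hhi]
    exact max_le_max hl hh
  · rw [dK_of_fst_ne h]
    exact le_top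

section Distances

variable {lam : ℝ≥0∞} {S₁ S₂ S₃ : WMTS Act}

lemma iInf_may_le_dm {s₁ : S₁.State} {s₂ : S₂.State} {k₁ : SLabel Act} {t₁ : S₁.State}
    (h : S₁.may s₁ k₁ t₁) :
    ⨅ k₂, ⨅ t₂, ⨅ _ : S₂.may s₂ k₂ t₂, dK k₁ k₂ + lam * dm lam S₁ S₂ t₁ t₂ ≤
      dm lam S₁ S₂ s₁ s₂ := by
  refine le_of_le_of_eq ?_ (congrFun₂ (OrderHom.map_lfp (dmF lam S₁ S₂)) s₁ s₂)
  exact le_max_of_le_left (le_iSup₂_of_le k₁ t₁ (le_iSup_of_le h le_rfl))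

lemma iInf_must_le_dm {s₁ : S₁.State} {s₂ : S₂.State} {k₂ : SLabel Act} {t₂ : S₂.State}
    (h : S₂.must s₂ k₂ t₂) :
    ⨅ k₁, ⨅ t₁, ⨅ _ : S₁.must s₁ k₁ t₁, dK k₁ k₂ + lam * dm lam S₁ S₂ t₁ t₂ ≤
      dm lam S₁ S₂ s₁ s₂ := by
  refine le_of_le_of_eq ?_ (congrFun₂ (OrderHom.map_lfp (dmF lam S₁ S₂)) s₁ s₂)
  exact le_max_of_le_right (le_iSup₂_of_le k₂ t₂ (le_iSup_of_le h le_rfl))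

lemma exists_may_lt_dm_add {s₁ : S₁.State} {s₂ : S₂.State} {k₁ : SLabel Act} {t₁ : S₁.State}
    {δ : ℝ≥0∞} (h : S₁.may s₁ k₁ t₁) (hfin : dm lam S₁ S₂ s₁ s₂ ≠ ⊤) (hδ : δ ≠ 0) :
    ∃ k₂ t₂, S₂.may s₂ k₂ t₂ ∧
      dK k₁ k₂ + lam * dm lam S₁ S₂ t₁ t₂ < dm lam S₁ S₂ s₁ s₂ + δ := by
  simpa only [iInf_lt_iff, exists_prop] using
    (iInf_may_le_dm h).trans_lt (ENNReal.lt_add_right hfin hδ)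

lemma exists_must_lt_dm_add {s₁ : S₁.State} {s₂ : S₂.State} {k₂ : SLabel Act}
    {t₂ : S₂.State} {δ : ℝ≥0∞} (h : S₂.must s₂ k₂ t₂) (hfin : dm lam S₁ S₂ s₁ s₂ ≠ ⊤)
    (hδ : δ ≠ 0) :
    ∃ k₁ t₁, S₁.must s₁ k₁ t₁ ∧
      dK k₁ k₂ + lam * dm lam S₁ S₂ t₁ t₂ < dm lam S₁ S₂ s₁ s₂ + δ := by
  simpa only [iInf_lt_iff, exists_prop] using
    (iInf_must_le_dm h).trans_lt (ENNReal.lt_add_right hfin hδ)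

lemma dmF_le {f : S₁.State → S₂.State → ℝ≥0∞} {s₁ : S₁.State} {s₂ : S₂.State} {x : ℝ≥0∞}
    (hmay : ∀ k₁ t₁, S₁.may s₁ k₁ t₁ →
      ∃ k₂ t₂, S₂.may s₂ k₂ t₂ ∧ dK k₁ k₂ + lam * f t₁ t₂ ≤ x)
    (hmust : ∀ k₂ t₂, S₂.must s₂ k₂ t₂ →
      ∃ k₁ t₁, S₁.must s₁ k₁ t₁ ∧ dK k₁ k₂ + lam * f t₁ t₂ ≤ x) :
    dmF lam S₁ S₂ f s₁ s₂ ≤ x := by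
  refine max_le (iSup₂_le fun k₁ t₁ => iSup_le fun h => ?_)
    (iSup₂_le fun k₂ t₂ => iSup_le fun h => ?_)
  · obtain ⟨k₂, t₂, h₂, hx⟩ := hmay k₁ t₁ h
    exact iInf₂_le_of_le k₂ t₂ (iInf_le_of_le h₂ hx)
  · obtain ⟨k₁, t₁, h₁, hx⟩ := hmust k₂ t₂ h
    exact iInf₂_le_of_le k₁ t₁ (iInf_le_of_le h₁ hx)

lemma diF_le {I₁ I₂ : WMTS Act} {f : I₁.State → I₂.State → ℝ≥0∞} {i₁ : I₁.State}
    {i₂ : I₂.State} {x : ℝ≥0∞}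
    (h₁ : ∀ k₁ j₁, I₁.must i₁ k₁ j₁ →
      ∃ k₂ j₂, I₂.must i₂ k₂ j₂ ∧ dK k₁ k₂ + lam * f j₁ j₂ ≤ x)
    (h₂ : ∀ k₂ j₂, I₂.must i₂ k₂ j₂ →
      ∃ k₁ j₁, I₁.must i₁ k₁ j₁ ∧ dK k₁ k₂ + lam * f j₁ j₂ ≤ x) :
    diF lam I₁ I₂ f i₁ i₂ ≤ x := by
  refine max_le (iSup₂_le fun k₁ j₁ => iSup_le fun h => ?_)
    (iSup₂_le fun k₂ j₂ => iSup_le fun h => ?_)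
  · obtain ⟨k₂, j₂, h', hx⟩ := h₁ k₁ j₁ h
    exact iInf₂_le_of_le k₂ j₂ (iInf_le_of_le h' hx)
  · obtain ⟨k₁, j₁, h', hx⟩ := h₂ k₂ j₂ h
    exact iInf₂_le_of_le k₁ j₁ (iInf_le_of_le h' hx)

lemma dmInit_eq_zero_of_refines (h : Refines S₁ S₂) : dmInit lam S₁ S₂ = 0 := by
  classical
  obtain ⟨R, hinit, hR⟩ := h
  suffices hle : dm lam S₁ S₂ ≤ fun s₁ s₂ => if R s₁ s₂ then 0 else ⊤ by
    simpa [dmInit, hinit] using hle S₁.init S₂.init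
  refine OrderHom.lfp_le _ fun s₁ s₂ => ?_
  by_cases hs : R s₁ s₂
  · rw [if_pos hs]
    refine dmF_le (fun k₁ t₁ h₁ => ?_) (fun k₂ t₂ h₂ => ?_)
    · obtain ⟨k₂, t₂, h₂, hk, ht⟩ := (hR s₁ s₂ hs).1 k₁ t₁ h₁
      exact ⟨k₂, t₂, h₂, by simp [dK_eq_zero_of_labelLE hk, ht]⟩
    · obtain ⟨k₁, t₁, h₁, hk, ht⟩ := (hR s₁ s₂ hs).2 k₂ t₂ h₂
      exact ⟨k₁, t₁, h₁, by simp [dK_eq_zero_of_labelLE hk, ht]⟩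
  · simp [hs]

lemma dm_triangle (s₁ : S₁.State) (s₂ : S₂.State) (s₃ : S₃.State) :
    dm lam S₁ S₃ s₁ s₃ ≤ dm lam S₁ S₂ s₁ s₂ + dm lam S₂ S₃ s₂ s₃ := by
  set A := dm lam S₁ S₂
  set B := dm lam S₂ S₃
  set g : S₁.State → S₃.State → ℝ≥0∞ := fun u w => ⨅ v, A u v + B v w
  have hcomp : ∀ (k₁ k₂ k₃ : SLabel Act) t₁ t₂ t₃, dK k₁ k₃ + lam * g t₁ t₃ ≤
      (dK k₁ k₂ + lam * A t₁ t₂) + (dK k₂ k₃ + lam * B t₂ t₃) := by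
    intro k₁ k₂ k₃ t₁ t₂ t₃
    calc dK k₁ k₃ + lam * g t₁ t₃ ≤ (dK k₁ k₂ + dK k₂ k₃) + lam * (A t₁ t₂ + B t₂ t₃) := by
          gcongr
          exacts [dK_triangle _ _ _, iInf_le _ t₂]
      _ = _ := by ring
  suffices hle : dm lam S₁ S₃ ≤ g from (hle s₁ s₃).trans (iInf_le _ s₂)
  refine OrderHom.lfp_le _ fun u w => le_iInf fun v => max_le ?_ ?_
  · refine iSup₂_le fun k₁ t₁ => iSup_le fun h₁ => ?_
    calc ⨅ k₃, ⨅ t₃, ⨅ _ : S₃.may w k₃ t₃, dK k₁ k₃ + lam * g t₁ t₃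
        ≤ ⨅ k₂, ⨅ t₂, ⨅ _ : S₂.may v k₂ t₂, (dK k₁ k₂ + lam * A t₁ t₂) + B v w := by
          refine le_iInf₂ fun k₂ t₂ => le_iInf fun h₂ => ?_
          refine le_trans ?_ (add_le_add_right (iInf_may_le_dm h₂) _)
          simp only [ENNReal.add_iInf]
          exact iInf₂_mono fun k₃ t₃ => iInf_mono fun _ => hcomp ..
      _ = (⨅ k₂, ⨅ t₂, ⨅ _ : S₂.may v k₂ t₂, dK k₁ k₂ + lam * A t₁ t₂) + B v w := by
          simp only [ENNReal.iInf_add]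
      _ ≤ A u v + B v w := add_le_add_left (iInf_may_le_dm (S₂ := S₂) (s₂ := v) h₁) _
  · refine iSup₂_le fun k₃ t₃ => iSup_le fun h₃ => ?_
    calc ⨅ k₁, ⨅ t₁, ⨅ _ : S₁.must u k₁ t₁, dK k₁ k₃ + lam * g t₁ t₃
        ≤ A u v + ⨅ k₂, ⨅ t₂, ⨅ _ : S₂.must v k₂ t₂, dK k₂ k₃ + lam * B t₂ t₃ := by
          simp only [ENNReal.add_iInf]
          refine le_iInf₂ fun k₂ t₂ => le_iInf fun h₂ => ?_
          refine le_trans ?_ (add_le_add_left (iInf_must_le_dm h₂) _)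
          simp only [ENNReal.iInf_add]
          exact iInf₂_mono fun k₁ t₁ => iInf_mono fun _ => hcomp ..
      _ ≤ A u v + B v w := add_le_add_right (iInf_must_le_dm (S₁ := S₂) (s₁ := v) h₃) _

end Distances

section Approximation

variable (lam δ : ℝ≥0∞) (I₁ S₂ : WMTS Act)

def approxStep (p : I₁.State × S₂.State) (ℓ : SLabel Act) (q : I₁.State × S₂.State) : Prop :=
  IsImpLabel ℓ ∧ (∃ k₂, S₂.may p.2 k₂ q.2 ∧ LabelLE ℓ k₂) ∧
    ((∃ k₁, I₁.must p.1 k₁ q.1 ∧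
        dK k₁ ℓ + lam * dm lam I₁ S₂ q.1 q.2 < dm lam I₁ S₂ p.1 p.2 + δ) ∨
      (q.1 = p.1 ∧ dm lam I₁ S₂ p.1 p.2 = ⊤))

def approxImpl : WMTS Act where
  State := I₁.State × S₂.State
  init := (I₁.init, S₂.init)
  may := approxStep lam δ I₁ S₂
  must := approxStep lam δ I₁ S₂
  must_may _ k _ h := ⟨k, LabelLE.refl k, h⟩

variable {lam δ I₁ S₂}

lemma exists_approxStep {i j : I₁.State} {s t : S₂.State} {k₁ k₂ k₂' : SLabel Act}
    (hk₁ : IsImpLabel k₁) (h₁ : I₁.must i k₁ j) (h₂ : S₂.may s k₂' t) (hk₂ : LabelLE k₂ k₂')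
    (hlt : dK k₁ k₂ + lam * dm lam I₁ S₂ j t < dm lam I₁ S₂ i s + δ) :
    ∃ ℓ, approxStep lam δ I₁ S₂ (i, s) ℓ (j, t) ∧ LabelLE ℓ k₂ ∧
      dK k₁ ℓ + lam * dm lam I₁ S₂ j t < dm lam I₁ S₂ i s + δ := by
  obtain ⟨ℓ, hℓ, hle, hd⟩ := exists_isImpLabel_labelLE_dK_le hk₁ k₂
  have hlt' := (add_le_add_left hd _).trans_lt hlt
  exact ⟨ℓ, ⟨hℓ, ⟨k₂', h₂, hle.trans hk₂⟩, .inl ⟨k₁, h₁, hlt'⟩⟩, hle, hlt'⟩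

lemma approxImpl_mem_impl (hI : I₁.IsImplementation) (hδ : δ ≠ 0) :
    approxImpl lam δ I₁ S₂ ∈ Impl S₂ := by
  refine ⟨⟨fun _ _ _ => Iff.rfl, fun _ _ _ h => h.1⟩, fun q s => q.2 = s, rfl, ?_⟩
  rintro ⟨i, s⟩ _ rfl
  refine ⟨fun ℓ q h => ?_, fun k₂ t h₂ => ?_⟩
  · obtain ⟨k₂, h₂, hle⟩ := h.2.1
    exact ⟨k₂, q.2, h₂, hle, rfl⟩
  obtain ⟨k₂', hk₂, h₂'⟩ := S₂.must_may _ _ _ h₂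
  by_cases htop : dm lam I₁ S₂ i s = ⊤
  · obtain ⟨ℓ, hℓ, hle, -⟩ := exists_isImpLabel_labelLE_dK_le (isImpLabel_pt k₂.1 0) k₂
    exact ⟨ℓ, (i, t), ⟨hℓ, ⟨k₂', h₂', hle.trans hk₂⟩, .inr ⟨rfl, htop⟩⟩, hle, rfl⟩
  · obtain ⟨k₁, j, h₁, hlt⟩ := exists_must_lt_dm_add h₂ htop hδ
    obtain ⟨ℓ, hstep, hle, -⟩ := exists_approxStep (hI.2 _ _ _ h₁) h₁ h₂' hk₂ hlt
    exact ⟨ℓ, (j, t), hstep, hle, rfl⟩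

lemma diInit_approxImpl_le (hI : I₁.IsImplementation) (hδ : δ ≠ 0) {ε : ℝ≥0∞}
    (hδε : δ + lam * ε ≤ ε) :
    diInit lam I₁ (approxImpl lam δ I₁ S₂) ≤ dmInit lam I₁ S₂ + ε := by
  classical
  set D := dm lam I₁ S₂
  let bound : I₁.State → I₁.State × S₂.State → ℝ≥0∞ := fun i q =>
    if i = q.1 then D q.1 q.2 + ε else ⊤
  suffices h : di lam I₁ (approxImpl lam δ I₁ S₂) ≤ bound from
    (h I₁.init (I₁.init, S₂.init)).trans_eq (if_pos rfl)
  refine OrderHom.lfp_le _ fun i q => ?_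
  obtain ⟨j, s⟩ := q
  rcases eq_or_ne i j with rfl | hij
  swap
  · simp [bound, hij]
  rcases eq_or_ne (D i s) ⊤ with htop | hfin
  · simp [bound, htop]
  have hstep : ∀ (k₁ ℓ : SLabel Act) j t, dK k₁ ℓ + lam * D j t < D i s + δ →
      dK k₁ ℓ + lam * bound j (j, t) ≤ bound i (i, s) := by
    intro k₁ ℓ j t hlt
    simp only [bound, if_true]
    calc dK k₁ ℓ + lam * (D j t + ε) = (dK k₁ ℓ + lam * D j t) + lam * ε := by ring
      _ ≤ D i s + δ + lam * ε := by gcongr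
      _ ≤ D i s + ε := by rw [add_assoc]; gcongr
  refine diF_le (fun k₁ j h₁ => ?_) ?_
  · obtain ⟨k₂, t, h₂, hlt⟩ := exists_may_lt_dm_add ((hI.1 _ _ _).2 h₁) hfin hδ
    obtain ⟨ℓ, hℓ, -, hlt'⟩ := exists_approxStep (hI.2 _ _ _ h₁) h₁ h₂ (LabelLE.refl k₂) hlt
    exact ⟨ℓ, (j, t), hℓ, hstep _ _ _ _ hlt'⟩
  · rintro ℓ ⟨j, t⟩ ⟨-, -, ⟨k₁, h₁, hlt⟩ | ⟨-, htop⟩⟩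
    · exact ⟨k₁, j, h₁, hstep _ _ _ _ hlt⟩
    · exact absurd htop hfin

end Approximation

theorem dt_le_dm_general {Act : Type} (lam : ℝ≥0∞)
    (hlam1 : lam < 1) (S₁ S₂ : WMTS Act) :
    dt lam S₁ S₂ ≤ dmInit lam S₁ S₂ := by
  refine iSup₂_le fun I₁ ⟨hI, hRef⟩ => ENNReal.le_of_forall_pos_le_add fun ε hε _ => ?_
  set δ := (1 - lam) * (ε : ℝ≥0∞)
  have hδ : δ ≠ 0 := mul_ne_zero (tsub_pos_of_lt hlam1).ne' (by exact_mod_cast hε.ne')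
  have hδε : δ + lam * ε ≤ ε := by
    rw [← add_mul, tsub_add_cancel_of_le hlam1.le, one_mul]
  calc ⨅ I₂ ∈ Impl S₂, diInit lam I₁ I₂
      ≤ diInit lam I₁ (approxImpl lam δ I₁ S₂) := iInf₂_le _ (approxImpl_mem_impl hI hδ)
    _ ≤ dmInit lam I₁ S₂ + ε := diInit_approxImpl_le hI hδ hδε
    _ ≤ dmInit lam I₁ S₁ + dmInit lam S₁ S₂ + ε := by gcongr; exact dm_triangle _ _ _
    _ = dmInit lam S₁ S₂ + ε := by rw [dmInit_eq_zero_of_refines hRef, zero_add]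

/-- the thorough refinement distance is bounded above by the
modal refinement distance. -/
theorem dt_le_dm {Act : Type} (lam : ℝ≥0∞) (hlam0 : 0 < lam)
    (hlam1 : lam < 1) (S₁ S₂ : WMTS Act)
    (hc₁ : CompactlyBranching lam S₁) (hc₂ : CompactlyBranching lam S₂) :
    dt lam S₁ S₂ ≤ dmInit lam S₁ S₂ :=
  dt_le_dm_general lam hlam1 S₁ S₂

end WMTSQuant
end

section
/- There is no unary operator 𝒟 on WMTS such that: (1) 𝒟(S) is deterministic for every WMTS S; (2) S ≤_m 𝒟(S) for every WMTS S; and (3) for every WMTS S, every deterministic WMTS D and every ε ≥ 0, d_m(S,D) ≤ ε implies d_m(𝒟(S),D) ≤ ε. -/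
open scoped ENNReal

namespace WMTSQuant

variable {Act : Type}

/-!
The two-branch specification `a[1].a[1] + a[2].a[2]` is at distance `max λ 1 = 1` from the
deterministic chain `a[1].a[2]`: the `[1]` branch pays `1` one step late, the `[2]` branch pays `1`
immediately. A deterministic system above the two-branch specification must merge the branches
into a single `a`-transition whose interval contains `[1, 2]`, followed by another one; against the
chain this costs `1` at the first step and, discounted, `λ` at the second, so its distance to the
chain is at least `1 + λ > 1`.
-/

lemma erealToNNE_monotone : Monotone erealToNNE := by
  intro x y hxy
  unfold erealToNNE
  split_ifs with hx hy hy
  · exact le_rfl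
  · exact absurd (top_le_iff.mp (hx ▸ hxy)) hy
  · exact le_top
  · rcases eq_or_ne x ⊥ with rfl | hxb
    · simp
    · exact ENNReal.ofReal_le_ofReal (EReal.toReal_le_toReal hxy hxb hy)

lemma erealToNNE_coe (r : ℝ) : erealToNNE (r : EReal) = ENNReal.ofReal r := by
  simp [erealToNNE]

def EInterval.single (n : ℤ) : EInterval :=
  ⟨(n : ℝ), (n : ℝ), Or.inr ⟨n, rfl⟩, Or.inr ⟨n, rfl⟩, le_rfl⟩

lemma dK_single (a : Act) (m n : ℤ) :
    dK (a, EInterval.single m) (a, EInterval.single n) = ENNReal.ofReal |(n : ℝ) - m| := by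
  rw [dK, if_pos rfl]
  dsimp only [EInterval.single]
  rw [← EReal.coe_sub, ← EReal.coe_sub, ← EReal.coe_zero,
    ← EReal.coe_strictMono.monotone.map_max, ← EReal.coe_strictMono.monotone.map_max,
    erealToNNE_coe]
  congr 1
  grind

lemma dK_mono_left {k k' : SLabel Act} (h : LabelLE k k') (ℓ : SLabel Act) :
    dK k ℓ ≤ dK k' ℓ := by
  unfold dK
  rw [h.1]
  split_ifs
  · exact erealToNNE_monotone (max_le_max (EReal.sub_le_sub le_rfl h.2.1)
      (max_le_max (EReal.sub_le_sub h.2.2 le_rfl) le_rfl))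
  · exact le_rfl

lemma dm_eq_dmF (lam : ℝ≥0∞) (S₁ S₂ : WMTS Act) (s₁ : S₁.State) (s₂ : S₂.State) :
    dm lam S₁ S₂ s₁ s₂ = dmF lam S₁ S₂ (dm lam S₁ S₂) s₁ s₂ :=
  congrFun (congrFun (OrderHom.map_lfp _).symm s₁) s₂

lemma le_dm_of_may {lam : ℝ≥0∞} {S₁ S₂ : WMTS Act} {s₁ t₁ : S₁.State} {s₂ : S₂.State}
    {k₁ : SLabel Act} (h : S₁.may s₁ k₁ t₁) {c : ℝ≥0∞}
    (hc : ∀ k₂ t₂, S₂.may s₂ k₂ t₂ → c ≤ dK k₁ k₂ + lam * dm lam S₁ S₂ t₁ t₂) :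
    c ≤ dm lam S₁ S₂ s₁ s₂ := by
  rw [dm_eq_dmF]
  exact le_max_of_le_left
    (le_iSup₂_of_le k₁ t₁ (le_iSup_of_le h (le_iInf₂ fun k₂ t₂ => le_iInf (hc k₂ t₂))))

lemma dm_le_of_simulation {lam : ℝ≥0∞} {S₁ S₂ : WMTS Act} (R : S₁.State → S₂.State → Prop)
    (f : S₁.State → S₂.State → ℝ≥0∞)
    (hmay : ∀ s₁ s₂, R s₁ s₂ → ∀ k₁ t₁, S₁.may s₁ k₁ t₁ →
      ∃ k₂ t₂, S₂.may s₂ k₂ t₂ ∧ R t₁ t₂ ∧ dK k₁ k₂ + lam * f t₁ t₂ ≤ f s₁ s₂)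
    (hmust : ∀ s₁ s₂, R s₁ s₂ → ∀ k₂ t₂, S₂.must s₂ k₂ t₂ →
      ∃ k₁ t₁, S₁.must s₁ k₁ t₁ ∧ R t₁ t₂ ∧ dK k₁ k₂ + lam * f t₁ t₂ ≤ f s₁ s₂)
    {s₁ : S₁.State} {s₂ : S₂.State} (h : R s₁ s₂) :
    dm lam S₁ S₂ s₁ s₂ ≤ f s₁ s₂ := by
  -- `g` is `f` on `R` and `⊤` off `R`.
  let g : S₁.State → S₂.State → ℝ≥0∞ := fun s₁ s₂ => ⨅ _ : R s₁ s₂, f s₁ s₂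
  have hg : ∀ {s₁ s₂}, R s₁ s₂ → g s₁ s₂ = f s₁ s₂ := fun h => iInf_pos h
  have hpre : dmF lam S₁ S₂ g ≤ g := by
    intro s₁ s₂
    refine le_iInf fun hR => max_le (iSup₂_le fun k₁ t₁ => iSup_le fun h₁ => ?_)
      (iSup₂_le fun k₂ t₂ => iSup_le fun h₂ => ?_)
    · obtain ⟨k₂, t₂, h₂, hR', hle⟩ := hmay s₁ s₂ hR k₁ t₁ h₁
      exact iInf₂_le_of_le k₂ t₂ (iInf_le_of_le h₂ (by rw [hg hR']; exact hle))
    · obtain ⟨k₁, t₁, h₁, hR', hle⟩ := hmust s₁ s₂ hR k₂ t₂ h₂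
      exact iInf₂_le_of_le k₁ t₁ (iInf_le_of_le h₁ (by rw [hg hR']; exact hle))
  calc dm lam S₁ S₂ s₁ s₂ ≤ g s₁ s₂ := OrderHom.lfp_le _ hpre s₁ s₂
    _ = f s₁ s₂ := hg h

lemma Deterministic.exists_may_of_simulation {S D : WMTS Act} (hD : Deterministic D)
    {R : S.State → D.State → Prop} {u : D.State} {s₁ s₂ t₁ t₂ : S.State}
    (hsim₁ : ∀ k t, S.may s₁ k t → ∃ k' t', D.may u k' t' ∧ LabelLE k k' ∧ R t t')
    (hsim₂ : ∀ k t, S.may s₂ k t → ∃ k' t', D.may u k' t' ∧ LabelLE k k' ∧ R t t')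
    {a : Act} {I₁ I₂ : EInterval} (h₁ : S.may s₁ (a, I₁) t₁) (h₂ : S.may s₂ (a, I₂) t₂) :
    ∃ J v, D.may u (a, J) v ∧ LabelLE (a, I₁) (a, J) ∧ LabelLE (a, I₂) (a, J) ∧
      R t₁ v ∧ R t₂ v := by
  obtain ⟨⟨b₁, J₁⟩, v₁, hv₁, hle₁, hR₁⟩ := hsim₁ _ _ h₁
  obtain ⟨⟨b₂, J₂⟩, v₂, hv₂, hle₂, hR₂⟩ := hsim₂ _ _ h₂
  obtain rfl : a = b₁ := hle₁.1
  obtain rfl : a = b₂ := hle₂.1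
  obtain ⟨rfl, rfl⟩ := hD u a J₁ J₂ v₁ v₂ hv₁ hv₂
  exact ⟨J₁, v₁, hv₁, hle₁, hle₂, hR₁, hR₂⟩

inductive DiamondState | root | left | right | sink

inductive ChainState | zero | one | two

def diamondMay (a : Act) : DiamondState → SLabel Act → DiamondState → Prop
  | .root, k, .left => k = (a, .single 1)
  | .root, k, .right => k = (a, .single 2)
  | .left, k, .sink => k = (a, .single 1)
  | .right, k, .sink => k = (a, .single 2)
  | _, _, _ => False

def diamond (a : Act) : WMTS Act where
  State := DiamondState
  init := .root
  may := diamondMay a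
  must _ _ _ := False
  must_may _ _ _ h := h.elim

def chainMay (a : Act) : ChainState → SLabel Act → ChainState → Prop
  | .zero, k, .one => k = (a, .single 1)
  | .one, k, .two => k = (a, .single 2)
  | _, _, _ => False

def chain (a : Act) : WMTS Act where
  State := ChainState
  init := .zero
  may := chainMay a
  must _ _ _ := False
  must_may _ _ _ h := h.elim

lemma diamond_may {a : Act} {s t : DiamondState} {k : SLabel Act} (h : (diamond a).may s k t) :
    (s = .root ∧ t = .left ∧ k = (a, .single 1)) ∨ (s = .root ∧ t = .right ∧ k = (a, .single 2)) ∨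
      (s = .left ∧ t = .sink ∧ k = (a, .single 1)) ∨
      (s = .right ∧ t = .sink ∧ k = (a, .single 2)) := by
  cases s <;> cases t <;> simp_all [diamond, diamondMay]

lemma chain_may {a : Act} {s t : ChainState} {k : SLabel Act} (h : (chain a).may s k t) :
    (s = .zero ∧ t = .one ∧ k = (a, .single 1)) ∨ (s = .one ∧ t = .two ∧ k = (a, .single 2)) := by
  cases s <;> cases t <;> simp_all [chain, chainMay]

lemma chain_deterministic (a : Act) : Deterministic (chain a) := by
  intro s b I₁ I₂ t₁ t₂ h₁ h₂
  rcases chain_may h₁ with ⟨rfl, rfl, h₁⟩ | ⟨rfl, rfl, h₁⟩ <;>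
    rcases chain_may h₂ with ⟨h, rfl, h₂⟩ | ⟨h, rfl, h₂⟩ <;> simp_all <;> rfl

def diamondChainBound : DiamondState → ChainState → ℝ≥0∞
  | .root, .zero => 1
  | .left, .one => 1
  | .right, .one => 0
  | .sink, .two => 0
  | _, _ => ⊤

lemma dmInit_diamond_chain_le_one {lam : ℝ≥0∞} (hlam : lam ≤ 1) (a : Act) :
    dmInit lam (diamond a) (chain a) ≤ 1 := by
  refine dm_le_of_simulation (S₁ := diamond a) (S₂ := chain a)
    (fun s t => diamondChainBound s t ≠ ⊤) diamondChainBound ?_ (fun _ _ _ _ _ h => h.elim)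
    (s₁ := .root) (s₂ := .zero) (by simp [diamondChainBound])
  intro s t hst k₁ t₁ h
  rcases diamond_may h with ⟨rfl, rfl, rfl⟩ | ⟨rfl, rfl, rfl⟩ | ⟨rfl, rfl, rfl⟩ | ⟨rfl, rfl, rfl⟩ <;>
    cases t <;> simp only [diamondChainBound, ne_eq, not_true_eq_false] at hst
  · exact ⟨_, .one, rfl, by simp [diamondChainBound], by norm_num [diamondChainBound, dK_single, hlam]⟩
  · exact ⟨_, .one, rfl, by simp [diamondChainBound], by norm_num [diamondChainBound, dK_single]⟩
  · exact ⟨_, .two, rfl, by simp [diamondChainBound], by norm_num [diamondChainBound, dK_single]⟩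
  · exact ⟨_, .two, rfl, by simp [diamondChainBound], by norm_num [diamondChainBound, dK_single]⟩

lemma one_add_le_dmInit_chain {lam : ℝ≥0∞} {D : WMTS Act} (a : Act) (hD : Deterministic D)
    (href : Refines (diamond a) D) : 1 + lam ≤ dmInit lam D (chain a) := by
  obtain ⟨R, hR₀, hsim⟩ := href
  obtain ⟨I, u, hu, -, h2I, hRl, hRr⟩ := hD.exists_may_of_simulation (hsim _ _ hR₀).1
    (hsim _ _ hR₀).1 (show (diamond a).may .root (a, .single 1) .left from rfl)
    (show (diamond a).may .root (a, .single 2) .right from rfl)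
  obtain ⟨J, v, hv, h1J, -, -, -⟩ := hD.exists_may_of_simulation (hsim _ _ hRl).1
    (hsim _ _ hRr).1 (show (diamond a).may .left (a, .single 1) .sink from rfl)
    (show (diamond a).may .right (a, .single 2) .sink from rfl)
  have hsecond : 1 ≤ dm lam D (chain a) u .one := by
    refine le_dm_of_may hv fun k t ht => ?_
    obtain ⟨⟨⟩, -, -⟩ | ⟨-, rfl, rfl⟩ := chain_may ht
    calc (1 : ℝ≥0∞) = dK (a, .single 1) (a, .single 2) := by rw [dK_single]; norm_num
      _ ≤ dK (a, J) (a, .single 2) := dK_mono_left h1J _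
      _ ≤ _ := le_self_add
  refine le_dm_of_may hu fun k t ht => ?_
  obtain ⟨-, rfl, rfl⟩ | ⟨⟨⟩, -, -⟩ := chain_may ht
  gcongr
  · calc (1 : ℝ≥0∞) = dK (a, .single 2) (a, .single 1) := by rw [dK_single]; norm_num
      _ ≤ dK (a, I) (a, .single 1) := dK_mono_left h2I _
  · exact le_mul_of_one_le_right' hsecond

/-- there is no determinization operator which is an upper
bound for modal refinement and least (up to distances) among deterministic
overapproximations. -/
theorem no_determinization_operator {Act : Type} [Nonempty Act]
    (lam : ℝ≥0∞) (hlam0 : 0 < lam) (hlam1 : lam < 1) :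
    ¬ ∃ D : WMTS Act → WMTS Act,
        (∀ S, Deterministic (D S)) ∧
        (∀ S, Refines S (D S)) ∧
        (∀ (S T : WMTS Act) (ε : ℝ≥0∞), Deterministic T →
          dmInit lam S T ≤ ε → dmInit lam (D S) T ≤ ε) := by
  rintro ⟨D, hdet, href, hleast⟩
  obtain ⟨a⟩ := ‹Nonempty Act›
  have hupper : dmInit lam (D (diamond a)) (chain a) ≤ 1 :=
    hleast _ _ 1 (chain_deterministic a) (dmInit_diamond_chain_le_one hlam1.le a)
  have hlower : 1 + lam ≤ dmInit lam (D (diamond a)) (chain a) :=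
    one_add_le_dmInit_chain a (hdet _) (href _)
  exact (ENNReal.lt_add_right ENNReal.one_ne_top hlam0.ne').not_ge (hlower.trans hupper)

end WMTSQuant
end
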